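/- Let Q be the bilinear form on ℤ² with matrix (−1, −1; 0, −1) (i.e., Q((a,b),(c,d)) = −ac − ad − bd). Let v ∈ ℤ² be primitive with Q(v,v) < −3, and let v₊, v₋ be the unique pair with v₋ × v = v × v₊ = v₋ × v₊ = 1 and |v₊|,|v₋| < |v|. Then Q(v₊, v₋) < 0. -/

import Mathlib

/-- Cross product on ℤ²: (a,b) × (c,d) = ad − bc. -/
def cross (v w : ℤ × ℤ) : ℤ := v.1 * w.2 - v.2 * w.1

/-- Euclidean norm of a vector in ℤ². -/
noncomputable def enormZ2 (v : ℤ × ℤ) : ℝ := Real.sqrt ((v.1 : ℝ) ^ 2 + (v.2 : ℝ) ^ 2)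

/-- A vector of ℤ² is primitive if its coordinates are coprime. -/
def IsPrimitive (v : ℤ × ℤ) : Prop := Int.gcd v.1 v.2 = 1

/-- The bilinear form with matrix `(−1, −1; 0, −1)`: `Q((a,b),(c,d)) = −ac − ad − bd`. -/
def QIminus (v w : ℤ × ℤ) : ℤ := -(v.1 * w.1) - v.1 * w.2 - v.2 * w.2

/-!
Write `χ = Q(v₊, v₋)`. The relations force `v = v₋ + v₊`, and since `Q(v₋, v₊) = χ - 1`,
`Q(v, v) = Q(v₋, v₋) + Q(v₊, v₊) + 2χ - 1`, while `4 Q(v₋, v₋) Q(v₊, v₊) = (1 - 2χ)² + 3`.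
The norm conditions make the dot product `T = v₋ · v₊` nonnegative (otherwise
`|v₋|²|v₊|² ≥ (1 - 2T)² > T² + 1`, against Lagrange's identity), and then bound `χ ≤ 1`.
If `χ ≥ 0`, then `χ ∈ {0, 1}`, so the negative definite values `Q(v₋, v₋)`, `Q(v₊, v₊)`
multiply to `1`, hence both equal `-1`, and `Q(v, v) = 2χ - 3 ≥ -3`.
-/

def dotZ2 (v w : ℤ × ℤ) : ℤ := v.1 * w.1 + v.2 * w.2

def normSqZ2 (v : ℤ × ℤ) : ℤ := dotZ2 v v

theorem cross_smul_eq_add_smul (u v w : ℤ × ℤ) :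
    cross u w • v = cross v w • u + cross u v • w := by
  ext <;> simp only [cross, Prod.smul_fst, Prod.smul_snd, Prod.fst_add, Prod.snd_add,
    smul_eq_mul] <;> ring

theorem eq_add_of_cross_eq_one {u v w : ℤ × ℤ} (huv : cross u v = 1) (hvw : cross v w = 1)
    (huw : cross u w = 1) : v = u + w := by
  simpa [huv, hvw, huw] using cross_smul_eq_add_smul u v w

theorem enormZ2_lt_enormZ2_iff {v w : ℤ × ℤ} : enormZ2 v < enormZ2 w ↔ normSqZ2 v < normSqZ2 w := by
  rw [enormZ2, enormZ2, Real.sqrt_lt_sqrt_iff (by positivity), normSqZ2, normSqZ2, dotZ2, dotZ2,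
    ← Int.cast_lt (R := ℝ)]
  push_cast
  ring_nf

theorem normSqZ2_mul_normSqZ2 (u w : ℤ × ℤ) :
    normSqZ2 u * normSqZ2 w = dotZ2 u w ^ 2 + cross u w ^ 2 := by
  simp only [normSqZ2, dotZ2, cross]
  ring

theorem normSqZ2_add (u w : ℤ × ℤ) :
    normSqZ2 (u + w) = normSqZ2 u + normSqZ2 w + 2 * dotZ2 u w := by
  simp only [normSqZ2, dotZ2, Prod.fst_add, Prod.snd_add]
  ring

theorem dotZ2_nonneg_of_normSqZ2_lt_add {u w : ℤ × ℤ} (huw : cross u w = 1)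
    (hu : normSqZ2 u < normSqZ2 (u + w)) (hw : normSqZ2 w < normSqZ2 (u + w)) :
    0 ≤ dotZ2 u w := by
  by_contra! hT
  rw [normSqZ2_add] at hu hw
  have hprod : (1 - 2 * dotZ2 u w) ^ 2 ≤ normSqZ2 u * normSqZ2 w := by
    rw [sq]
    exact mul_le_mul (by linarith) (by linarith) (by linarith) (by linarith)
  rw [normSqZ2_mul_normSqZ2, huw] at hprod
  nlinarith

theorem QIminus_le_one_of_dotZ2_nonneg {u w : ℤ × ℤ} (huw : cross u w = 1)
    (hT : 0 ≤ dotZ2 u w) : QIminus w u ≤ 1 := by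
  have hLagrange := normSqZ2_mul_normSqZ2 u w
  simp only [QIminus, normSqZ2, dotZ2, cross] at *
  by_contra! hχ
  -- with `p = w₁u₂` we have `u₁w₂ = 1 + p` and `p ≤ -2 - T`, so `|u|²|w|² ≥ (1 + p)² + p² > T² + 1`
  have hp : w.1 * u.2 ≤ -2 - (u.1 * w.1 + u.2 * w.2) := by linarith
  have hlower : (u.1 * w.2) ^ 2 + (u.2 * w.1) ^ 2 ≤
      (u.1 * u.1 + u.2 * u.2) * (w.1 * w.1 + w.2 * w.2) := by
    nlinarith [sq_nonneg (u.1 * w.1), sq_nonneg (u.2 * w.2)]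
  nlinarith

theorem QIminus_self_nonpos (v : ℤ × ℤ) : QIminus v v ≤ 0 := by
  simp only [QIminus]
  nlinarith [sq_nonneg (v.1 + v.2), sq_nonneg v.1, sq_nonneg v.2]

theorem QIminus_add_self (u w : ℤ × ℤ) :
    QIminus (u + w) (u + w) = QIminus u u + QIminus w w + 2 * QIminus w u - cross u w := by
  simp only [QIminus, cross, Prod.fst_add, Prod.snd_add]
  ring

theorem four_mul_QIminus_self_mul_QIminus_self {u w : ℤ × ℤ} (huw : cross u w = 1) :
    4 * QIminus u u * QIminus w w = (1 - 2 * QIminus w u) ^ 2 + 3 := by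
  simp only [QIminus, cross] at *
  linear_combination (2 * (2 * u.1 * w.1 + u.1 * w.2 + u.2 * w.1 + 2 * u.2 * w.2)
    + 2 * (u.1 * w.2 - u.2 * w.1) + 4) * huw

theorem Iminus_chi_neg_general (v vm vp : ℤ × ℤ)
    (hQ : QIminus v v < -3)
    (h1 : cross vm v = 1) (h2 : cross v vp = 1) (h3 : cross vm vp = 1)
    (h4 : enormZ2 vp < enormZ2 v) (h5 : enormZ2 vm < enormZ2 v) :
    QIminus vp vm < 0 := by
  obtain rfl := eq_add_of_cross_eq_one h1 h2 h3
  rw [enormZ2_lt_enormZ2_iff] at h4 h5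
  have hχ_le := QIminus_le_one_of_dotZ2_nonneg h3 (dotZ2_nonneg_of_normSqZ2_lt_add h3 h5 h4)
  have hprod := four_mul_QIminus_self_mul_QIminus_self h3
  rw [QIminus_add_self, h3] at hQ
  by_contra! hχ_nonneg
  have hsq : (1 - 2 * QIminus vp vm) ^ 2 = 1 := by
    interval_cases QIminus vp vm <;> norm_num
  have hone : QIminus vm vm * QIminus vp vp = 1 := by linarith
  have hm := QIminus_self_nonpos vm
  have hp := QIminus_self_nonpos vp
  rcases Int.mul_eq_one_iff_eq_one_or_neg_one.mp hone with ⟨hm1, hp1⟩ | ⟨hm1, hp1⟩ <;> omega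

/-- For the form `I₋` with `n = 1`: if `v` is primitive with `Q(v,v) < −3` and `(v₋, v₊)` is
the unique pair with `v₋ × v = v × v₊ = v₋ × v₊ = 1` and `|v₊|, |v₋| < |v|`, then
`Q(v₊, v₋) < 0`. -/
theorem Iminus_chi_neg (v vm vp : ℤ × ℤ) (hprim : IsPrimitive v)
    (hQ : QIminus v v < -3)
    (h1 : cross vm v = 1) (h2 : cross v vp = 1) (h3 : cross vm vp = 1)
    (h4 : enormZ2 vp < enormZ2 v) (h5 : enormZ2 vm < enormZ2 v) :
    QIminus vp vm < 0 :=
  Iminus_chi_neg_general v vm vp hQ h1 h2 h3 h4 h5
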